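/- The conical kernel is positive semidefinite on the plane, so the discrete Hamiltonian is nonnegative: for any N ≥ 1, any points q₁,…,q_N ∈ ℝ² and any momenta p₁,…,p_N ∈ ℝ², Σ_{i=1}^N Σ_{j=1}^N ⟨p_i, p_j⟩ e^{−‖q_i − q_j‖} ≥ 0. In particular H(q,p) = (1/2) Σ_{i,j} ⟨p_i, p_j⟩ e^{−‖q_i − q_j‖} ≥ 0, which is needed for H to serve as a semi-metric measuring the deformation cost between templates. -/

import Mathlib

/-!
Subordination: for `r ≥ 0`,
`e^{-r} = π^{-1/2} ∫₀^∞ t^{-3/2} e^{-1/t} e^{-t r²/4} dt`,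
so the conical kernel is a nonnegative mixture of Gaussian kernels `e^{-t ‖x - y‖²}`.
Each Gaussian kernel matrix is `D (exp ∘ 2t G) D` with `G` a Gram matrix and `D` diagonal, and
entrywise `exp` preserves positive semidefiniteness by the Schur product theorem applied to its
power series. The Laplace transform above reduces, after `t = x⁻²`, to the Cauchy–Schlömilch
integral `∫₀^∞ e^{-(x - b/x)²} dx = √π / 2`. Finally the Hamiltonian is `𝟙ᵀ (Gram(p) ⊙ K) 𝟙`
for the conical kernel matrix `K`, which is nonnegative by the Schur product theorem again.
-/

open Real Set MeasureTheory Matrix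
open scoped Nat ComplexOrder

section CauchySchlomilch

variable {b : ℝ}

theorem hasDerivAt_id_sub_const_div (b : ℝ) {x : ℝ} (hx : x ≠ 0) :
    HasDerivAt (fun x => x - b / x) (1 + b / x ^ 2) x := by
  refine ((hasDerivAt_id' x).sub ((hasDerivAt_inv hx).const_mul b)).congr_deriv (by ring)
    |>.congr_of_eventuallyEq (.of_forall fun y => ?_)
  simp [div_eq_mul_inv]

theorem injOn_id_sub_const_div_Ioi (hb : 0 ≤ b) : InjOn (fun x => x - b / x) (Ioi 0) := by
  intro x (hx : 0 < x) y (hy : 0 < y) hxy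
  have : (x - y) * (x * y + b) = 0 := by
    field_simp at hxy
    linear_combination hxy
  rcases mul_eq_zero.1 this with h | h
  · linarith
  · nlinarith [mul_pos hx hy]

theorem image_id_sub_const_div_Ioi (hb : 0 < b) : (fun x => x - b / x) '' Ioi 0 = univ := by
  refine eq_univ_of_forall fun y => ?_
  set s := √(y ^ 2 + 4 * b)
  have hs : s ^ 2 = y ^ 2 + 4 * b := sq_sqrt (by positivity)
  have hys : |y| < s := by
    rw [← sqrt_sq_eq_abs]
    exact sqrt_lt_sqrt (sq_nonneg _) (by linarith)
  have hpos : 0 < y + s := by linarith [neg_abs_le y]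
  refine ⟨(y + s) / 2, by simp only [mem_Ioi]; linarith, ?_⟩
  field_simp
  linear_combination hs

theorem hasDerivAt_const_div (b : ℝ) {x : ℝ} (hx : x ≠ 0) :
    HasDerivAt (fun x => b / x) (-(b / x ^ 2)) x := by
  simpa [div_eq_mul_inv] using (hasDerivAt_inv hx).const_mul b

theorem injOn_const_div_Ioi (hb : 0 < b) : InjOn (fun x => b / x) (Ioi 0) :=
  fun _ _ _ _ h => inv_injective (mul_left_cancel₀ hb.ne' h)

theorem image_const_div_Ioi_zero (hb : 0 < b) : (fun x => b / x) '' Ioi 0 = Ioi 0 := by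
  ext y
  refine ⟨?_, fun hy => ⟨b / y, div_pos hb hy, div_div_cancel₀ hb.ne'⟩⟩
  rintro ⟨x, hx, rfl⟩
  exact div_pos hb hx

theorem integral_one_add_div_sq_mul_exp_neg_sub_div_sq (hb : 0 < b) :
    ∫ x in Ioi 0, (1 + b / x ^ 2) * exp (-(x - b / x) ^ 2) = √π := by
  have hsubst := integral_image_eq_integral_abs_deriv_smul measurableSet_Ioi
    (fun x hx => (hasDerivAt_id_sub_const_div b (ne_of_gt hx)).hasDerivWithinAt)
    (injOn_id_sub_const_div_Ioi hb.le) (fun y => exp (-y ^ 2))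
  rw [image_id_sub_const_div_Ioi hb, setIntegral_univ] at hsubst
  have hgauss : ∫ y, exp (-y ^ 2) = √π := by simpa using integral_gaussian 1
  rw [← hgauss, hsubst]
  refine setIntegral_congr_fun measurableSet_Ioi fun x hx => ?_
  rw [abs_of_pos (by positivity), smul_eq_mul]

theorem integral_div_sq_mul_exp_neg_sub_div_sq (hb : 0 < b) :
    ∫ x in Ioi 0, b / x ^ 2 * exp (-(x - b / x) ^ 2) = ∫ x in Ioi 0, exp (-(x - b / x) ^ 2) := by
  have hsubst := integral_image_eq_integral_abs_deriv_smul measurableSet_Ioi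
    (fun x hx => (hasDerivAt_const_div b (ne_of_gt hx)).hasDerivWithinAt) (injOn_const_div_Ioi hb)
    (fun y => exp (-(y - b / y) ^ 2))
  rw [image_const_div_Ioi_zero hb] at hsubst
  rw [hsubst]
  refine setIntegral_congr_fun measurableSet_Ioi fun x (hx : 0 < x) => ?_
  rw [abs_neg, abs_of_pos (by positivity), smul_eq_mul, div_div_cancel₀ hb.ne']
  ring_nf

theorem integral_exp_neg_sub_div_sq (hb : 0 ≤ b) :
    ∫ x in Ioi 0, exp (-(x - b / x) ^ 2) = √π / 2 := by
  rcases hb.eq_or_lt with rfl | hb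
  · simpa using integral_gaussian_Ioi 1
  have hsum := integral_one_add_div_sq_mul_exp_neg_sub_div_sq hb
  have hint := Integrable.of_integral_ne_zero (hsum ▸ (sqrt_pos.2 pi_pos).ne')
  have hnonneg : ∀ x ∈ Ioi (0 : ℝ), 0 ≤ b / x ^ 2 * exp (-(x - b / x) ^ 2) :=
    fun x (hx : 0 < x) => by positivity
  have hint₁ : IntegrableOn (fun x => exp (-(x - b / x) ^ 2)) (Ioi 0) := by
    refine hint.mono' (by fun_prop) ?_
    filter_upwards [ae_restrict_mem measurableSet_Ioi] with x hx
    rw [norm_of_nonneg (exp_pos _).le]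
    nlinarith [exp_pos (-(x - b / x) ^ 2), hnonneg x hx]
  have hint₂ : IntegrableOn (fun x => b / x ^ 2 * exp (-(x - b / x) ^ 2)) (Ioi 0) := by
    refine hint.mono' (by fun_prop) ?_
    filter_upwards [ae_restrict_mem measurableSet_Ioi] with x hx
    rw [norm_of_nonneg (hnonneg x hx)]
    nlinarith [exp_pos (-(x - b / x) ^ 2)]
  simp_rw [add_mul, one_mul] at hsum
  rw [integral_add hint₁ hint₂, integral_div_sq_mul_exp_neg_sub_div_sq hb] at hsum
  linarith

theorem integral_rpow_mul_exp_neg_inv_sub_mul (hb : 0 ≤ b) :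
    ∫ t in Ioi 0, t ^ (-3 / 2 : ℝ) * exp (-t⁻¹ - b ^ 2 * t) = √π * exp (-(2 * b)) := by
  rw [← integral_comp_rpow_Ioi _ (by norm_num : (-2 : ℝ) ≠ 0)]
  have hpt : ∀ x ∈ Ioi (0 : ℝ), (|(-2 : ℝ)| * x ^ ((-2 : ℝ) - 1)) •
      ((x ^ (-2 : ℝ)) ^ (-3 / 2 : ℝ) * exp (-(x ^ (-2 : ℝ))⁻¹ - b ^ 2 * x ^ (-2 : ℝ))) =
      2 * exp (-(2 * b)) * exp (-(x - b / x) ^ 2) := by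
    intro x (hx : 0 < x)
    have hjac : x ^ ((-2 : ℝ) - 1) * (x ^ (-2 : ℝ)) ^ (-3 / 2 : ℝ) = 1 := by
      rw [← rpow_mul hx.le, ← rpow_add hx]
      norm_num
    have hinv : x ^ (-2 : ℝ) = (x ^ 2)⁻¹ := by
      rw [rpow_neg hx.le]
      norm_cast
    calc _ = 2 * (x ^ ((-2 : ℝ) - 1) * (x ^ (-2 : ℝ)) ^ (-3 / 2 : ℝ)) *
          exp (-(x ^ (-2 : ℝ))⁻¹ - b ^ 2 * x ^ (-2 : ℝ)) := by
          rw [smul_eq_mul, abs_of_neg (by norm_num)]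
          ring
      _ = _ := by
          rw [hjac, hinv, mul_one, mul_assoc, ← exp_add]
          congr 2
          field_simp
          ring
  rw [setIntegral_congr_fun measurableSet_Ioi hpt, integral_const_mul,
    integral_exp_neg_sub_div_sq hb]
  ring

end CauchySchlomilch

namespace Matrix

variable {ι : Type*} [Fintype ι]

theorem PosSemidef.map_pow {𝕜 : Type*} [RCLike 𝕜] {A : Matrix ι ι 𝕜} (hA : A.PosSemidef)
    (n : ℕ) : (A.map (· ^ n)).PosSemidef := by
  induction n with
  | zero =>
    convert posSemidef_vecMulVec_self_star (1 : ι → 𝕜) using 1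
    ext i j
    simp [vecMulVec_apply]
  | succ n ih =>
    convert ih.hadamard hA using 1
    ext i j
    simp [pow_succ]

theorem PosSemidef.map_exp {A : Matrix ι ι ℝ} (hA : A.PosSemidef) : (A.map exp).PosSemidef := by
  refine .of_dotProduct_mulVec_nonneg ?_ fun c => ?_
  · ext i j
    simp [← hA.isHermitian.apply i j]
  have hseries : HasSum (fun n : ℕ => star c ⬝ᵥ (((n ! : ℝ)⁻¹ • A.map (· ^ n)) *ᵥ c))
      (star c ⬝ᵥ (A.map exp *ᵥ c)) := by
    simp only [dotProduct, mulVec, map_apply, smul_apply, Finset.mul_sum, smul_eq_mul]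
    refine hasSum_sum fun i _ => hasSum_sum fun j _ => ?_
    have := ((NormedSpace.expSeries_div_hasSum_exp (A i j)).mul_right (c j)).mul_left (star c i)
    simpa [div_eq_inv_mul, Real.exp_eq_exp_ℝ] using this
  exact hseries.nonneg fun n => ((hA.map_pow n).smul (by positivity)).dotProduct_mulVec_nonneg c

theorem posSemidef_integral {α : Type*} [MeasurableSpace α] {μ : Measure α}
    {A : α → Matrix ι ι ℝ} (hA : ∀ᵐ t ∂μ, (A t).PosSemidef)
    (hint : ∀ i j, Integrable (fun t => A t i j) μ) :
    (of fun i j => ∫ t, A t i j ∂μ).PosSemidef := by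
  refine .of_dotProduct_mulVec_nonneg ?_ fun c => ?_
  · ext i j
    simpa using integral_congr_ae (hA.mono fun t ht => ht.isHermitian.apply i j)
  have hint' : ∀ i j, Integrable (fun t => star c i * (A t i j * c j)) μ := fun i j =>
    ((hint i j).mul_const _).const_mul _
  have hquad : star c ⬝ᵥ ((of fun i j => ∫ t, A t i j ∂μ) *ᵥ c) =
      ∫ t, star c ⬝ᵥ (A t *ᵥ c) ∂μ := by
    simp only [dotProduct, mulVec, of_apply, Finset.mul_sum]
    rw [integral_finsetSum _ fun i _ => integrable_finsetSum _ fun j _ => hint' i j]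
    refine Finset.sum_congr rfl fun i _ => ?_
    rw [integral_finsetSum _ fun j _ => hint' i j]
    refine Finset.sum_congr rfl fun j _ => ?_
    rw [integral_const_mul, integral_mul_const]
  rw [hquad]
  exact integral_nonneg_of_ae (hA.mono fun t ht => ht.dotProduct_mulVec_nonneg c)

variable {E : Type*} [NormedAddCommGroup E] [InnerProductSpace ℝ E]

theorem posSemidef_exp_neg_mul_norm_sub_sq (x : ι → E) {t : ℝ} (ht : 0 ≤ t) :
    (of fun i j => exp (-(t * ‖x i - x j‖ ^ 2))).PosSemidef := by
  classical
  let d : ι → ℝ := fun i => exp (-(t * ‖x i‖ ^ 2))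
  have hgram : ((2 * t) • gram ℝ x).PosSemidef := (posSemidef_gram ℝ x).smul (by positivity)
  convert hgram.map_exp.conjTranspose_mul_mul_same (diagonal d) using 1
  ext i j
  simp [d, diagonal_mul, mul_diagonal, gram, norm_sub_sq_real, ← exp_add]
  ring_nf

theorem posSemidef_exp_neg_norm_sub (x : ι → E) :
    (of fun i j => exp (-‖x i - x j‖)).PosSemidef := by
  let A : ℝ → Matrix ι ι ℝ := fun t =>
    (t ^ (-3 / 2 : ℝ) * exp (-t⁻¹)) • of fun i j => exp (-(t / 4 * ‖x i - x j‖ ^ 2))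
  have hA : ∀ᵐ t ∂volume.restrict (Ioi 0), (A t).PosSemidef := by
    filter_upwards [ae_restrict_mem measurableSet_Ioi] with t (ht : 0 < t)
    exact (posSemidef_exp_neg_mul_norm_sub_sq x (by positivity)).smul (by positivity)
  have hentry : ∀ i j, ∫ t in Ioi 0, A t i j = √π * exp (-‖x i - x j‖) := by
    intro i j
    convert integral_rpow_mul_exp_neg_inv_sub_mul (b := ‖x i - x j‖ / 2) (by positivity)
      using 2
    · ext t
      simp only [A, smul_apply, of_apply, smul_eq_mul, mul_assoc, ← exp_add]
      ring_nf
    · ring_nf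
  have hint : ∀ i j, Integrable (fun t => A t i j) (volume.restrict (Ioi 0)) := fun i j =>
    .of_integral_ne_zero (by rw [hentry]; positivity)
  convert (posSemidef_integral hA hint).smul (inv_nonneg.2 (sqrt_nonneg π)) using 1
  ext i j
  simp [hentry, pi_pos.le]

end Matrix

theorem conical_kernel_posSemidef_hamiltonian_nonneg_general (N : ℕ)
    (q p : Fin N → EuclideanSpace ℝ (Fin 2)) :
    0 ≤ ∑ i : Fin N, ∑ j : Fin N, (inner ℝ (p i) (p j) : ℝ) * Real.exp (-‖q i - q j‖) ∧
    0 ≤ (1 / 2 : ℝ) *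
      ∑ i : Fin N, ∑ j : Fin N, (inner ℝ (p i) (p j) : ℝ) * Real.exp (-‖q i - q j‖) := by
  have hK := (posSemidef_gram ℝ p).hadamard (posSemidef_exp_neg_norm_sub q)
  have hsum : 0 ≤ ∑ i : Fin N, ∑ j : Fin N,
      (inner ℝ (p i) (p j) : ℝ) * Real.exp (-‖q i - q j‖) := by
    simpa [mulVec, dotProduct, gram] using hK.dotProduct_mulVec_nonneg 1
  exact ⟨hsum, by positivity⟩

/-- The conical kernel `e^{−r}` is positive semidefinite on the plane, so the discrete
Hamiltonian is nonnegative: `Σ_{i,j} ⟨p_i,p_j⟩ e^{−‖q_i − q_j‖} ≥ 0`, and in particular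
`H(q,p) = (1/2) Σ_{i,j} ⟨p_i,p_j⟩ e^{−‖q_i − q_j‖} ≥ 0`. -/
theorem conical_kernel_posSemidef_hamiltonian_nonneg (N : ℕ) (hN : 1 ≤ N)
    (q p : Fin N → EuclideanSpace ℝ (Fin 2)) :
    0 ≤ ∑ i : Fin N, ∑ j : Fin N, (inner ℝ (p i) (p j) : ℝ) * Real.exp (-‖q i - q j‖) ∧
    0 ≤ (1 / 2 : ℝ) *
      ∑ i : Fin N, ∑ j : Fin N, (inner ℝ (p i) (p j) : ℝ) * Real.exp (-‖q i - q j‖) :=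
  conical_kernel_posSemidef_hamiltonian_nonneg_general N q p
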